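/- arXiv:1812.03309 — 4 statements merged into one kernel-verified Lean document; each statement's English description precedes it below -/
import Mathlib

section
/- Let n ≥ 1, p ≤ 0 and c > 0, and let B ⊂ ℝⁿ be an open ball. If w ∈ C²(B) ∩ C(B̄) is convex with w < 0 in B, w = 0 on ∂B, and det D²w(x) ≥ c (−w(x))^{p−1} for all x ∈ B, then sup_{x ∈ B} ‖∇w(x)‖ = ∞. -/
/-!
Suppose `‖∇w‖ ≤ N` on `B = ball z r`. Since `w` is continuous on `B̄` and vanishes on `∂B`,
`-w(x) ≤ N (r - |x - z|)`, so the equation gives `det D²w(x) ≥ c N^(p-1) (r - |x - z|)^(p-1)`,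
which is not integrable over `B` because `p - 1 ≤ -1`. On the other hand `∇w` is injective on `B`:
if `∇w(a) = ∇w(b) = ξ`, then `a` and `b` minimize the convex function `w - ⟪ξ, ·⟫`, hence so does
every point of `[a, b]`; thus `∇w` is constant on `[a, b]` and `D²w` kills `b - a` at its midpoint,
contradicting `det D²w > 0`. By the change of variables formula, `∫_B det D²w = |∇w(B)|`, which is
at most the volume of the ball of radius `N`.
-/

open MeasureTheory Metric Set Filter

/-- The Hessian matrix `(∂²w/∂xᵢ∂xⱼ(x))` of `w : ℝⁿ → ℝ` at `x`. -/
noncomputable def hess {n : ℕ} (u : EuclideanSpace ℝ (Fin n) → ℝ) (x : EuclideanSpace ℝ (Fin n)) :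
    Matrix (Fin n) (Fin n) ℝ :=
  fun i j => fderiv ℝ (fun y => fderiv ℝ u y (EuclideanSpace.single j 1)) x (EuclideanSpace.single i 1)

open Topology
open scoped Matrix

theorem hess_eq_transpose_toMatrix {n : ℕ} {w : EuclideanSpace ℝ (Fin n) → ℝ}
    {x : EuclideanSpace ℝ (Fin n)} (h : DifferentiableAt ℝ (gradient w) x) :
    hess w x = (LinearMap.toMatrix (EuclideanSpace.basisFun (Fin n) ℝ).toBasis
      (EuclideanSpace.basisFun (Fin n) ℝ).toBasis (fderiv ℝ (gradient w) x : _ →ₗ[ℝ] _))ᵀ := by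
  ext i j
  have hcoord : (fun y => fderiv ℝ w y (EuclideanSpace.single j 1))
      = EuclideanSpace.proj j ∘ gradient w := by
    ext y
    rw [← inner_gradient_left, EuclideanSpace.inner_single_right]
    simp
  rw [hess, hcoord, ((EuclideanSpace.proj j).hasFDerivAt.comp x h.hasFDerivAt).fderiv]
  simp [LinearMap.toMatrix_apply]

theorem hess_det_eq_det_fderiv_gradient {n : ℕ} {w : EuclideanSpace ℝ (Fin n) → ℝ}
    {x : EuclideanSpace ℝ (Fin n)} (h : DifferentiableAt ℝ (gradient w) x) :
    (hess w x).det = (fderiv ℝ (gradient w) x).det := by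
  rw [hess_eq_transpose_toMatrix h, Matrix.det_transpose, LinearMap.det_toMatrix]

theorem exists_norm_eq_one_smul_eq {F : Type*} [NormedAddCommGroup F] [NormedSpace ℝ F]
    [Nontrivial F] (v : F) : ∃ u : F, ‖u‖ = 1 ∧ v = ‖v‖ • u := by
  rcases eq_or_ne v 0 with rfl | hv
  · obtain ⟨u, hu⟩ := exists_norm_eq F zero_le_one
    exact ⟨u, hu, by simp⟩
  · exact ⟨‖v‖⁻¹ • v, by simp [norm_smul, hv], by simp [smul_smul, hv]⟩

theorem exists_mem_sphere_norm_sub_eq {F : Type*} [NormedAddCommGroup F] [NormedSpace ℝ F]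
    [Nontrivial F] {x z : F} {r : ℝ} (hx : x ∈ closedBall z r) :
    ∃ b ∈ sphere z r, ‖b - x‖ = r - dist x z := by
  obtain ⟨u, hu, hxu⟩ := exists_norm_eq_one_smul_eq (x - z)
  have hr : 0 ≤ r := dist_nonneg.trans hx
  refine ⟨z + r • u, by simp [norm_smul, hu, abs_of_nonneg hr], ?_⟩
  have : z + r • u - x = (r - ‖x - z‖) • u := by
    rw [sub_smul, ← hxu]; abel
  rw [this, norm_smul, hu, mul_one, dist_eq_norm, Real.norm_of_nonneg]
  rwa [sub_nonneg, ← dist_eq_norm]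

theorem lineMap_mem_ball_of_mem_closedBall {F : Type*} [NormedAddCommGroup F] [NormedSpace ℝ F]
    {x y z : F} {r t : ℝ} (hx : x ∈ ball z r)
    (hy : y ∈ closedBall z r) (ht : t ∈ Ico (0 : ℝ) 1) : AffineMap.lineMap x y t ∈ ball z r := by
  rw [AffineMap.lineMap_apply_module, ← isOpen_ball.interior_eq]
  refine (convex_ball z r).combo_interior_closure_mem_interior (by rwa [isOpen_ball.interior_eq])
    ?_ (sub_pos.2 ht.2) ht.1 (by ring)
  rwa [closure_ball z (pos_of_mem_ball hx).ne']

theorem rpow_le_div_mul_of_le_mul {a b N c q D : ℝ} (ha : 0 < a) (hb : 0 < b) (hab : a ≤ N * b)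
    (hq : q ≤ 0) (hc : 0 < c) (hD : c * a ^ q ≤ D) : b ^ q ≤ N ^ (-q) / c * D := by
  have hN : 0 < N := pos_of_mul_pos_left (ha.trans_le hab) hb.le
  calc b ^ q = N ^ (-q) * (N * b) ^ q := by
        rw [Real.mul_rpow hN.le hb.le, ← mul_assoc, ← Real.rpow_add hN, neg_add_cancel,
          Real.rpow_zero, one_mul]
    _ ≤ N ^ (-q) * (D / c) := by
        refine mul_le_mul_of_nonneg_left ((Real.rpow_le_rpow_of_nonpos ha hab hq).trans ?_)
          (by positivity)
        rwa [le_div_iff₀ hc, mul_comm]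
    _ = N ^ (-q) / c * D := by ring

section Gradient

variable {E : Type*} [NormedAddCommGroup E] [InnerProductSpace ℝ E] [CompleteSpace E]
  {s : Set E} {w : E → ℝ}

theorem ContDiffOn.differentiableAt_gradient (hs : IsOpen s) (hw : ContDiffOn ℝ 2 w s) {x : E}
    (hx : x ∈ s) : DifferentiableAt ℝ (gradient w) x :=
  (InnerProductSpace.toDual ℝ E).symm.toContinuousLinearEquiv.differentiableAt.comp x
    (((hw.fderiv_of_isOpen hs (by norm_num : (1 : WithTop ℕ∞) + 1 ≤ 2)).differentiableOn
      one_ne_zero x hx).differentiableAt (hs.mem_nhds hx))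

theorem ConvexOn.add_inner_gradient_le (hw : ConvexOn ℝ s w) {x y : E} (hx : x ∈ s) (hy : y ∈ s)
    (hd : DifferentiableAt ℝ w x) : w x + inner ℝ (gradient w x) (y - x) ≤ w y := by
  set L := AffineMap.lineMap (k := ℝ) x y
  have hL : ConvexOn ℝ (L ⁻¹' s) (w ∘ L) := hw.comp_affineMap L
  have hderiv : HasDerivAt (w ∘ L) (inner ℝ (gradient w x) (y - x)) 0 := by
    rw [inner_gradient_left]
    exact hd.hasFDerivAt.comp_hasDerivAt_of_eq 0 AffineMap.hasDerivAt_lineMap (by simp [L])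
  have := hL.le_slope_of_hasDerivAt (by simpa [L] using hx) (by simpa [L] using hy) one_pos hderiv
  rw [slope_def_field, Function.comp_apply, Function.comp_apply, AffineMap.lineMap_apply_one,
    AffineMap.lineMap_apply_zero, sub_zero, div_one] at this
  linarith

theorem ConvexOn.gradient_eq_of_mem_segment (hs : IsOpen s) (hw : ConvexOn ℝ s w)
    (hd : ∀ x ∈ s, DifferentiableAt ℝ w x) {a b x : E} (ha : a ∈ s) (hb : b ∈ s)
    (hab : gradient w a = gradient w b) (hx : x ∈ segment ℝ a b) :
    gradient w x = gradient w a := by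
  set ξ := gradient w a
  set h : E → ℝ := fun y => w y - inner ℝ ξ y
  have hh : ConvexOn ℝ s h := hw.sub ((innerₛₗ ℝ ξ).concaveOn hw.1)
  have ha_min : IsMinOn h s a := fun y hy => by
    have := hw.add_inner_gradient_le ha hy (hd a ha)
    show w a - _ ≤ w y - _
    rw [inner_sub_right] at this
    linarith
  have hba : h b ≤ h a := by
    have := hw.add_inner_gradient_le hb ha (hd b hb)
    simp only [h, ← hab, inner_sub_right] at this ⊢
    linarith
  have hxs : x ∈ s := hw.1.segment_subset ha hb hx
  have hx_min : IsLocalMin h x := by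
    refine IsMinOn.isLocalMin (fun y hy => ?_) (hs.mem_nhds hxs)
    exact ((hh.le_on_segment ha hb hx).trans (max_le le_rfl hba)).trans (ha_min hy)
  have hderiv : HasFDerivAt h (fderiv ℝ w x - innerSL ℝ ξ) x :=
    (hd x hxs).hasFDerivAt.sub (innerSL ℝ ξ).hasFDerivAt
  refine ext_inner_right ℝ fun v => ?_
  have := congrArg (· v) (hx_min.hasFDerivAt_eq_zero hderiv)
  simp only [sub_apply, innerSL_apply_apply, zero_apply, sub_eq_zero] at this
  rw [inner_gradient_left, this]

theorem ConvexOn.injOn_gradient [FiniteDimensional ℝ E] (hs : IsOpen s) (hw : ConvexOn ℝ s w)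
    (hd : ∀ x ∈ s, DifferentiableAt ℝ w x) (hd2 : ∀ x ∈ s, DifferentiableAt ℝ (gradient w) x)
    (hdet : ∀ x ∈ s, (fderiv ℝ (gradient w) x).det ≠ 0) : InjOn (gradient w) s := by
  intro a ha b hb hab
  by_contra hne
  set L := AffineMap.lineMap (k := ℝ) a b
  have hm : L (1 / 2) ∈ s := hw.1.lineMap_mem ha hb ⟨by norm_num, by norm_num⟩
  have hderiv : HasDerivAt (gradient w ∘ L) (fderiv ℝ (gradient w) (L (1 / 2)) (b - a)) (1 / 2) :=
    (hd2 _ hm).hasFDerivAt.comp_hasDerivAt _ AffineMap.hasDerivAt_lineMap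
  have hconst : gradient w ∘ L =ᶠ[𝓝 (1 / 2)] fun _ => gradient w a := by
    filter_upwards [Ioo_mem_nhds (by norm_num : (0 : ℝ) < 1 / 2) (by norm_num : (1 / 2 : ℝ) < 1)]
      with t ht
    exact hw.gradient_eq_of_mem_segment hs hd ha hb hab
      ((segment_eq_image_lineMap ℝ a b).symm ▸ mem_image_of_mem L (Ioo_subset_Icc_self ht))
  have hker : fderiv ℝ (gradient w) (L (1 / 2)) (b - a) = 0 :=
    hderiv.unique ((hasDerivAt_const _ _).congr_of_eventuallyEq hconst)
  refine hdet _ hm (LinearMap.det_eq_zero_iff_ker_ne_bot.2 ?_)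
  exact (Submodule.ne_bot_iff _).2 ⟨b - a, hker, sub_ne_zero.2 (Ne.symm hne)⟩

theorem abs_sub_le_of_norm_gradient_le {z x y : E} {r N : ℝ}
    (hwc : ContinuousOn w (closedBall z r)) (hd : ∀ u ∈ ball z r, DifferentiableAt ℝ w u)
    (hN : ∀ u ∈ ball z r, ‖gradient w u‖ ≤ N) (hx : x ∈ ball z r) (hy : y ∈ closedBall z r) :
    |w y - w x| ≤ N * ‖y - x‖ := by
  set L := AffineMap.lineMap (k := ℝ) x y
  have hL : ∀ t ∈ Ico (0 : ℝ) 1, L t ∈ ball z r := fun t ht =>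
    lineMap_mem_ball_of_mem_closedBall hx hy ht
  have := norm_image_sub_le_of_norm_deriv_right_le_segment (f := w ∘ L)
    (f' := fun t => inner ℝ (gradient w (L t)) (y - x))
    (hwc.comp AffineMap.lineMap_continuous.continuousOn fun t ht =>
      (convex_closedBall z r).lineMap_mem (ball_subset_closedBall hx) hy ht)
    (fun t ht => by
      rw [inner_gradient_left]
      exact ((hd _ (hL t ht)).hasFDerivAt.comp_hasDerivAt t
        AffineMap.hasDerivAt_lineMap).hasDerivWithinAt)
    (fun t ht => (abs_real_inner_le_norm _ _).trans
      (mul_le_mul_of_nonneg_right (hN _ (hL t ht)) (norm_nonneg _)))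
    1 (right_mem_Icc.2 zero_le_one)
  simpa [L] using this

theorem neg_le_mul_sub_dist_of_norm_gradient_le [Nontrivial E] {z x : E} {r N : ℝ}
    (hwc : ContinuousOn w (closedBall z r)) (hd : ∀ u ∈ ball z r, DifferentiableAt ℝ w u)
    (hN : ∀ u ∈ ball z r, ‖gradient w u‖ ≤ N) (hw0 : ∀ b ∈ sphere z r, w b = 0)
    (hx : x ∈ ball z r) : -w x ≤ N * (r - dist x z) := by
  obtain ⟨b, hb, hbx⟩ := exists_mem_sphere_norm_sub_eq (ball_subset_closedBall hx)
  have := abs_sub_le_of_norm_gradient_le hwc hd hN hx (sphere_subset_closedBall hb)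
  rw [hw0 b hb, zero_sub, abs_neg, hbx] at this
  exact (neg_le_abs _).trans this

end Gradient

theorem integrableOn_abs_det_fderiv_of_isBounded_image {E : Type*} [NormedAddCommGroup E]
    [NormedSpace ℝ E] [FiniteDimensional ℝ E] [MeasurableSpace E] [BorelSpace E]
    (μ : Measure E) [μ.IsAddHaarMeasure] {s : Set E} {f : E → E} {f' : E → E →L[ℝ] E}
    (hs : MeasurableSet s) (hf' : ∀ x ∈ s, HasFDerivWithinAt f (f' x) s x) (hf : InjOn f s)
    (hb : Bornology.IsBounded (f '' s)) : IntegrableOn (fun x => |(f' x).det|) s μ := by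
  simpa using (integrableOn_image_iff_integrableOn_abs_det_fderiv_smul μ hs hf' hf
    (fun _ => (1 : ℝ))).1 (integrableOn_const hb.measure_lt_top.ne)

theorem not_integrableOn_Ioo_rpow_sub {q : ℝ} (hq : q ≤ -1) {a b : ℝ} (hab : a < b) :
    ¬ IntegrableOn (fun y => (b - y) ^ q) (Ioo a b) := by
  intro h
  have hI : IntervalIntegrable (fun y => (b - y) ^ q) volume a b :=
    (intervalIntegrable_iff_integrableOn_Ioo_of_le hab.le).2 h
  have hI' : IntervalIntegrable (fun x : ℝ => x ^ q) volume 0 (b - a) := by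
    simpa using (hI.comp_sub_left b).symm
  have := (intervalIntegral.integrableOn_Ioo_rpow_iff (sub_pos.2 hab)).1
    ((intervalIntegrable_iff_integrableOn_Ioo_of_le (sub_pos.2 hab).le).1 hI')
  linarith

theorem not_integrableOn_ball_rpow_sub_dist {E : Type*} [NormedAddCommGroup E] [NormedSpace ℝ E]
    [FiniteDimensional ℝ E] [Nontrivial E] [MeasurableSpace E] [BorelSpace E]
    (μ : Measure E) [μ.IsAddHaarMeasure] {q : ℝ} (hq : q ≤ -1) (z : E) {r : ℝ} (hr : 0 < r) :
    ¬ IntegrableOn (fun x => (r - dist x z) ^ q) (ball z r) μ := by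
  intro h
  rw [← (measurePreserving_add_right μ z).integrableOn_comp_preimage
    (measurableEmbedding_addRight z)] at h
  have hball : (fun x => x + z) ⁻¹' ball z r = ball 0 r := by
    ext x; simp
  have hcomp : (fun x => (r - dist x z) ^ q) ∘ (fun x => x + z) = fun x => (r - ‖x‖) ^ q := by
    ext x; simp
  rw [hball, hcomp, integrableOn_fun_norm_addHaar (f := fun y => (r - y) ^ q) μ] at h
  set d := Module.finrank ℝ E
  refine not_integrableOn_Ioo_rpow_sub hq (half_lt_self hr) ?_
  refine ((h.mono_set (Ioo_subset_Ioo_left (half_pos hr).le)).const_mul ((r / 2) ^ (d - 1))⁻¹).mono'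
    ((measurable_const.sub measurable_id).pow_const q).aestronglyMeasurable
    (ae_restrict_of_forall_mem measurableSet_Ioo fun y hy => ?_)
  have hpos : 0 < (r - y) ^ q := Real.rpow_pos_of_pos (sub_pos.2 hy.2) q
  have hy' : (r / 2) ^ (d - 1) ≤ y ^ (d - 1) := pow_le_pow_left₀ (half_pos hr).le hy.1.le _
  rw [Real.norm_of_nonneg hpos.le, smul_eq_mul, ← mul_assoc, le_mul_iff_one_le_left hpos]
  exact (one_le_inv_mul₀ (by positivity)).2 hy'

/-- for `p ≤ 0` and `c > 0`, a convex function on a ball, negative inside,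
vanishing on the boundary, with `det D²w ≥ c (-w)^{p-1}`, has unbounded gradient. -/
theorem stmt6 (n : ℕ) (hn : 1 ≤ n) (p : ℝ) (hp : p ≤ 0) (c : ℝ) (hc : 0 < c)
    (z : EuclideanSpace ℝ (Fin n)) (r : ℝ) (hr : 0 < r)
    (w : EuclideanSpace ℝ (Fin n) → ℝ)
    (hwconv : ConvexOn ℝ (closedBall z r) w) (hw2 : ContDiffOn ℝ 2 w (ball z r))
    (hwcont : ContinuousOn w (closedBall z r))
    (hwneg : ∀ x ∈ ball z r, w x < 0) (hw0 : ∀ x ∈ sphere z r, w x = 0)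
    (hpde : ∀ x ∈ ball z r, c * (-w x) ^ (p - 1) ≤ (hess w x).det) :
    ∀ N : ℝ, ∃ x ∈ ball z r, N < ‖gradient w x‖ := by
  have : Nonempty (Fin n) := ⟨⟨0, hn⟩⟩
  intro N
  by_contra! hN
  have hd : ∀ x ∈ ball z r, DifferentiableAt ℝ w x := fun x hx =>
    (hw2.contDiffAt (isOpen_ball.mem_nhds hx)).differentiableAt (by norm_num)
  have hd2 : ∀ x ∈ ball z r, DifferentiableAt ℝ (gradient w) x := fun x hx =>
    hw2.differentiableAt_gradient isOpen_ball hx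
  have hdet : ∀ x ∈ ball z r, c * (-w x) ^ (p - 1) ≤ |(fderiv ℝ (gradient w) x).det| :=
    fun x hx => (hess_det_eq_det_fderiv_gradient (hd2 x hx) ▸ hpde x hx).trans (le_abs_self _)
  have hinj : InjOn (gradient w) (ball z r) :=
    (hwconv.subset ball_subset_closedBall (convex_ball z r)).injOn_gradient isOpen_ball hd hd2
      fun x hx => abs_pos.1 <| (mul_pos hc (Real.rpow_pos_of_pos
        (neg_pos.2 (hwneg x hx)) _)).trans_le (hdet x hx)
  have hjac := integrableOn_abs_det_fderiv_of_isBounded_image volume measurableSet_ball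
    (fun x hx => (hd2 x hx).hasFDerivAt.hasFDerivWithinAt) hinj
    ((isBounded_closedBall (x := 0) (r := N)).subset <| image_subset_iff.2 fun x hx => by
      simpa using hN x hx)
  refine not_integrableOn_ball_rpow_sub_dist volume (by linarith : p - 1 ≤ -1) z hr <|
    (hjac.const_mul (N ^ (-(p - 1)) / c)).mono'
      ((measurable_const.sub (measurable_id.dist measurable_const)).pow_const _).aestronglyMeasurable
      (ae_restrict_of_forall_mem measurableSet_ball fun x hx => ?_)
  have hdist : 0 < r - dist x z := sub_pos.2 hx
  rw [Real.norm_of_nonneg (Real.rpow_nonneg hdist.le _)]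
  exact rpow_le_div_mul_of_le_mul (neg_pos.2 (hwneg x hx)) hdist
    (neg_le_mul_sub_dist_of_norm_gradient_le hwcont hd hN hw0 hx) (by linarith) hc (hdet x hx)
end

section
/- Let n ≥ 1, 0 < p < 1, K > 0 and R̄ > 0. Let Ω ⊂ ℝⁿ be a bounded open convex set satisfying a uniform enclosing sphere condition with radius K, i.e., for every x₀ ∈ ∂Ω there exists z ∈ ℝⁿ with Ω ⊆ B(z, K) and ‖x₀ − z‖ = K. Let R : Ω → ℝ satisfy 0 ≤ R(x) ≤ R̄ for all x ∈ Ω. Then there exists a constant C, depending only on n, p, R̄ and K, such that every convex function u ∈ C²(Ω) ∩ C(Ω̄) with u < 0 in Ω, u = 0 on ∂Ω and det D²u(x) = R(x)(−u(x))^{p−1} in Ω satisfies sup_{x ∈ Ω} ‖∇u(x)‖ ≤ C. -/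
/-!
Comparison with a barrier. If `Ω ⊆ B(z, K)`, put `s(y) = K² - ‖y - z‖²` and
`w = b s^(p+1) - a s`, which is `≤ 0` on `∂Ω`. At a negative interior minimum of `u - w` we would
have `-u > -w ≥ a s / 2` and `D²u ≥ D²w ≥ a I + 4b(p+1)p s^(p-1) (y - z)(y - z)ᵀ`, hence
`det D²u ≥ aⁿ (1 + 4b(p+1)p s^(p-1) ‖y - z‖² / a)`; for suitable `a`, `b` depending only on `n`,
`p`, `R̄`, `K` this is at least `R̄ (a s / 2)^(p-1) > R̄ (-u)^(p-1) ≥ det D²u`. So `-u ≤ a s`, and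
if the enclosing sphere touches `∂Ω` at `y`, then `a s(x) ≤ 2aK ‖y - x‖`. Finally, along the
segment from `x` to the boundary point `x + T ∇u(x)`, convexity bounds `‖∇u(x)‖²` by the slope
`-u(x) / T ≤ 2aK ‖∇u(x)‖`.
-/

open MeasureTheory Metric Set Filter

open Topology Matrix

theorem IsLocalMin.deriv_deriv_nonneg {f : ℝ → ℝ} {x₀ : ℝ} (h : IsLocalMin f x₀)
    (hf : ContinuousAt f x₀) : 0 ≤ deriv (deriv f) x₀ := by
  by_contra! hneg
  have hmax : IsLocalMax f x₀ := isLocalMax_of_deriv_deriv_neg hneg h.deriv_eq_zero hf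
  have hconst : f =ᶠ[𝓝 x₀] fun _ => f x₀ :=
    (h.and hmax).mono fun x hx => le_antisymm hx.2 hx.1
  have hderiv : deriv f =ᶠ[𝓝 x₀] fun _ => 0 :=
    hconst.eventuallyEq_nhds.mono fun x hx => by simp [hx.deriv_eq]
  simp [hderiv.deriv_eq] at hneg

theorem IsLocalMin.nonneg_of_hasDerivAt_of_hasDerivAt {f f' : ℝ → ℝ} {x₀ c : ℝ}
    (h : IsLocalMin f x₀) (hf : ∀ᶠ x in 𝓝 x₀, HasDerivAt f (f' x) x) (hf' : HasDerivAt f' c x₀) :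
    0 ≤ c := by
  have hderiv : deriv f =ᶠ[𝓝 x₀] f' := hf.mono fun x hx => hx.deriv
  simpa [hderiv.deriv_eq, hf'.deriv] using h.deriv_deriv_nonneg hf.self_of_nhds.continuousAt

theorem le_fderiv_fderiv_of_isLocalMin_sub {E : Type*} [NormedAddCommGroup E] [NormedSpace ℝ E]
    {u w : E → ℝ} {w' : ℝ → ℝ} {x ξ : E} {c : ℝ} (hmin : IsLocalMin (fun y => u y - w y) x)
    (hu : ContDiffAt ℝ 2 u x) (hw : ∀ᶠ t in 𝓝 0, HasDerivAt (fun t => w (x + t • ξ)) (w' t) t)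
    (hw' : HasDerivAt w' c 0) : c ≤ fderiv ℝ (fderiv ℝ u) x ξ ξ := by
  have hL : ∀ t : ℝ, HasDerivAt (fun t : ℝ => x + t • ξ) ξ t := fun t => by
    simpa using ((hasDerivAt_id t).smul_const ξ).const_add x
  have hL0 : Tendsto (fun t : ℝ => x + t • ξ) (𝓝 0) (𝓝 x) := by
    simpa using (hL 0).continuousAt.tendsto
  have hu' : ∀ᶠ t in 𝓝 (0 : ℝ),
      HasDerivAt (fun t => u (x + t • ξ)) (fderiv ℝ u (x + t • ξ) ξ) t :=
    (hL0.eventually (hu.eventually (by simp))).mono fun t ht =>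
      (ht.differentiableAt two_ne_zero).hasFDerivAt.comp_hasDerivAt t (hL t)
  have hB : HasFDerivAt (fderiv ℝ u) (fderiv ℝ (fderiv ℝ u) x) x :=
    ((hu.fderiv_right (m := 1) one_add_one_eq_two.le).differentiableAt one_ne_zero).hasFDerivAt
  have hu'' :
      HasDerivAt (fun t : ℝ => fderiv ℝ u (x + t • ξ) ξ) (fderiv ℝ (fderiv ℝ u) x ξ ξ) 0 := by
    have := (by simpa using hB : HasFDerivAt (fderiv ℝ u) _ (x + (0 : ℝ) • ξ)).comp_hasDerivAt 0
      (hL 0)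
    simpa using this.clm_apply (hasDerivAt_const 0 ξ)
  have hmin' : IsLocalMin (fun t : ℝ => u (x + t • ξ) - w (x + t • ξ)) 0 :=
    IsLocalMin.comp_continuous (f := fun y => u y - w y) (g := fun t : ℝ => x + t • ξ)
      (by simpa using hmin) (hL 0).continuousAt
  have := hmin'.nonneg_of_hasDerivAt_of_hasDerivAt ((hu'.and hw).mono fun t ht => ht.1.sub ht.2)
    (hu''.sub hw')
  linarith

theorem Matrix.one_le_det_of_posSemidef_sub_one {m : Type*} [Fintype m] [DecidableEq m]
    {C : Matrix m m ℝ} (hC : (C - 1).PosSemidef) : 1 ≤ C.det := by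
  have hCh : C.IsHermitian := by simpa using hC.isHermitian.add isHermitian_one
  have hev : ∀ i, 1 ≤ hCh.eigenvalues i := fun i => by
    set v := hCh.eigenvectorBasis i
    have hv : star ⇑v ⬝ᵥ ⇑v = 1 := by
      rw [dotProduct_comm, ← EuclideanSpace.inner_eq_star_dotProduct, real_inner_self_eq_norm_sq,
        hCh.eigenvectorBasis.orthonormal.1 i, one_pow]
    have := hC.dotProduct_mulVec_nonneg ⇑v
    rw [sub_mulVec, dotProduct_sub, one_mulVec, hv] at this
    rw [hCh.eigenvalues_eq i]
    simpa using this
  rw [hCh.det_eq_prod_eigenvalues]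
  simpa using Finset.prod_le_prod (fun _ _ => zero_le_one) fun i _ => hev i

open MatrixOrder in
theorem Matrix.PosDef.det_le_det_of_posSemidef_sub {m : Type*} [Fintype m] [DecidableEq m]
    {A B : Matrix m m ℝ} (hA : A.PosDef) (hBA : (B - A).PosSemidef) : A.det ≤ B.det := by
  -- Writing `A = Mᴴ M`, congruence by `M⁻¹` reduces the claim to the case `A = 1`.
  obtain ⟨M, rfl⟩ := CStarAlgebra.nonneg_iff_eq_star_mul_self.mp hA.posSemidef.nonneg
  rw [star_eq_conjTranspose] at *
  have hdetA : (Mᴴ * M).det = M.det ^ 2 := by simp [det_mul, sq]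
  have hM : IsUnit M.det := by
    refine Ne.isUnit fun h => ?_
    simpa [hdetA, h] using hA.det_pos
  set N := M⁻¹
  have hMN : M * N = 1 := mul_nonsing_inv M hM
  have hC : (Nᴴ * B * N - 1).PosSemidef := by
    have h1 : Nᴴ * (Mᴴ * M) * N = 1 := by
      calc Nᴴ * (Mᴴ * M) * N = (M * N)ᴴ * (M * N) := by
            simp only [conjTranspose_mul, Matrix.mul_assoc]
        _ = 1 := by simp [hMN]
    have := hBA.conjTranspose_mul_mul_same N
    rwa [Matrix.mul_sub, Matrix.sub_mul, h1] at this
  have hdetN : M.det * N.det = 1 := by rw [← det_mul, hMN, det_one]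
  have hdetC : (Nᴴ * B * N).det = B.det * N.det ^ 2 := by
    rw [det_mul, det_mul, det_conjTranspose, star_trivial]
    ring
  have := one_le_det_of_posSemidef_sub_one hC
  rw [hdetC] at this
  have hB : B.det = B.det * N.det ^ 2 * M.det ^ 2 := by
    linear_combination (-B.det * (1 + M.det * N.det)) * hdetN
  rw [hdetA, hB]
  exact le_mul_of_one_le_left (sq_nonneg _) this

theorem Matrix.det_smul_one_add_smul_vecMulVec {m : Type*} [Fintype m] [DecidableEq m] {a : ℝ}
    (ha : a ≠ 0) (c : ℝ) (v : m → ℝ) :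
    (a • (1 : Matrix m m ℝ) + c • vecMulVec v v).det =
      a ^ Fintype.card m * (1 + c * (v ⬝ᵥ v) / a) := by
  have : a • (1 : Matrix m m ℝ) + c • vecMulVec v v =
      a • (1 + replicateCol Unit ((c / a) • v) * replicateRow Unit v) := by
    rw [← vecMulVec_eq, smul_add, smul_vecMulVec, smul_smul, mul_div_cancel₀ _ ha]
  rw [this, det_smul, det_one_add_replicateCol_mul_replicateRow, dotProduct_smul, smul_eq_mul]
  ring

theorem Matrix.posDef_smul_one_add_smul_vecMulVec {m : Type*} [Fintype m] [DecidableEq m]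
    {a c : ℝ} (ha : 0 < a) (hc : 0 ≤ c) (v : m → ℝ) :
    (a • (1 : Matrix m m ℝ) + c • vecMulVec v v).PosDef := by
  simpa using (PosDef.one.smul ha).add_posSemidef ((posSemidef_vecMulVec_self_star v).smul hc)

theorem Matrix.dotProduct_smul_one_add_smul_vecMulVec_mulVec {m : Type*} [Fintype m]
    [DecidableEq m] (a c : ℝ) (v ξ : m → ℝ) :
    ξ ⬝ᵥ ((a • (1 : Matrix m m ℝ) + c • vecMulVec v v) *ᵥ ξ) =
      a * (ξ ⬝ᵥ ξ) + c * (v ⬝ᵥ ξ) ^ 2 := by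
  simp only [add_mulVec, smul_mulVec, vecMulVec_mulVec, one_mulVec, dotProduct_add,
    dotProduct_smul]
  rw [op_smul_eq_mul, dotProduct_comm ξ v, smul_eq_mul, smul_eq_mul]
  ring

section Barrier

variable {E : Type*} [NormedAddCommGroup E]

noncomputable def barrier (a b p K : ℝ) (z y : E) : ℝ :=
  b * (K ^ 2 - ‖y - z‖ ^ 2) ^ (p + 1) - a * (K ^ 2 - ‖y - z‖ ^ 2)

theorem exists_hasDerivAt_barrier_line [InnerProductSpace ℝ E] {a b p K : ℝ} {z x : E} (ξ : E)
    (hp : 0 ≤ p) (hx : ‖x - z‖ < K) :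
    ∃ w' : ℝ → ℝ, (∀ t, HasDerivAt (fun t => barrier a b p K z (x + t • ξ)) (w' t) t) ∧
      HasDerivAt w' (4 * b * (p + 1) * p * (K ^ 2 - ‖x - z‖ ^ 2) ^ (p - 1) * inner ℝ (x - z) ξ ^ 2
        + 2 * (a - b * (p + 1) * (K ^ 2 - ‖x - z‖ ^ 2) ^ p) * ‖ξ‖ ^ 2) 0 := by
  have hL : ∀ t : ℝ, HasDerivAt (fun t : ℝ => x + t • ξ - z) ξ t := fun t => by
    simpa using (((hasDerivAt_id t).smul_const ξ).const_add x).sub_const z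
  set ψ' : ℝ → ℝ := fun r => a - b * (p + 1) * (K ^ 2 - r) ^ p
  have hψ : ∀ r, HasDerivAt (fun r => b * (K ^ 2 - r) ^ (p + 1) - a * (K ^ 2 - r)) (ψ' r) r := by
    intro r
    have h := ((Real.hasDerivAt_rpow_const (x := K ^ 2 - r) (p := p + 1)
      (Or.inr (by linarith))).comp r ((hasDerivAt_id r).const_sub (K ^ 2)))
    refine ((h.const_mul b).sub
      (((hasDerivAt_id r).const_sub (K ^ 2)).const_mul a)).congr_deriv ?_
    rw [add_sub_cancel_right]
    ring
  have hs : 0 < K ^ 2 - ‖x - z‖ ^ 2 := by nlinarith [norm_nonneg (x - z)]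
  have hψ' : HasDerivAt ψ' (b * (p + 1) * p * (K ^ 2 - ‖x - z‖ ^ 2) ^ (p - 1)) (‖x - z‖ ^ 2) := by
    have h := (Real.hasDerivAt_rpow_const (x := K ^ 2 - ‖x - z‖ ^ 2) (p := p)
      (Or.inl hs.ne')).comp _ ((hasDerivAt_id (‖x - z‖ ^ 2)).const_sub (K ^ 2))
    refine ((h.const_mul (b * (p + 1))).const_sub a).congr_deriv ?_
    ring
  -- Along the line the barrier is `ψ ∘ σ` with `σ t = ‖x + t • ξ - z‖²`, so its second derivative
  -- is `ψ''(σ) σ'² + ψ'(σ) σ''`.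
  refine ⟨fun t => ψ' (‖x + t • ξ - z‖ ^ 2) * (2 * inner ℝ (x + t • ξ - z) ξ), fun t => ?_, ?_⟩
  · exact (hψ _).comp t (hL t).norm_sq
  · have hσ := (hL 0).norm_sq
    have hI : HasDerivAt (fun t : ℝ => 2 * inner ℝ (x + t • ξ - z) ξ) (2 * ‖ξ‖ ^ 2) 0 := by
      simpa [real_inner_self_eq_norm_sq] using
        ((hL 0).inner ℝ (hasDerivAt_const 0 ξ)).const_mul 2
    simp only [zero_smul, add_zero] at hσ hI
    refine (((by simpa using hψ' : HasDerivAt ψ' _ (‖x + (0:ℝ) • ξ - z‖ ^ 2)).comp 0 hσ).mul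
      hI).congr_deriv ?_
    simp only [ψ', Function.comp, zero_smul, add_zero]
    ring

theorem barrier_le {a b p K : ℝ} {z y : E} (hb : 0 ≤ b) (hp : 0 ≤ p)
    (hab : 4 * b * (K ^ 2) ^ p ≤ a) (hy : ‖y - z‖ ≤ K) :
    barrier a b p K z y ≤ -(a * (K ^ 2 - ‖y - z‖ ^ 2) / 2) := by
  set s := K ^ 2 - ‖y - z‖ ^ 2
  have hs : 0 ≤ s := by nlinarith [norm_nonneg (y - z)]
  have hsp : s ^ p ≤ (K ^ 2) ^ p := Real.rpow_le_rpow hs (by linarith [sq_nonneg ‖y - z‖]) hp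
  have hsp1 : s ^ (p + 1) = s ^ p * s := by rw [Real.rpow_add' hs (by linarith), Real.rpow_one]
  unfold barrier
  rw [hsp1]
  nlinarith [mul_le_mul_of_nonneg_left hsp hb, mul_nonneg hb (Real.rpow_nonneg hs p)]

theorem neg_mul_le_barrier {a b p K : ℝ} {z y : E} (hb : 0 ≤ b) (hy : ‖y - z‖ ≤ K) :
    -(a * (K ^ 2 - ‖y - z‖ ^ 2)) ≤ barrier a b p K z y := by
  have : 0 ≤ K ^ 2 - ‖y - z‖ ^ 2 := by nlinarith [norm_nonneg (y - z)]
  have := mul_nonneg hb (Real.rpow_nonneg this (p + 1))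
  unfold barrier
  linarith

theorem continuous_barrier {a b p K : ℝ} (hp : 0 ≤ p) (z : E) :
    Continuous (barrier a b p K z) := by
  unfold barrier
  fun_prop (disch := linarith)

theorem le_fderiv_fderiv_of_isLocalMin_sub_barrier [InnerProductSpace ℝ E] {u : E → ℝ}
    {a b p K : ℝ} {z x : E} (hb : 0 ≤ b) (hp0 : 0 ≤ p) (hp1 : p ≤ 1) (hab : 4 * b * (K ^ 2) ^ p ≤ a)
    (hmin : IsLocalMin (fun y => u y - barrier a b p K z y) x) (hu : ContDiffAt ℝ 2 u x)
    (hx : ‖x - z‖ < K) (ξ : E) :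
    a * ‖ξ‖ ^ 2 + 4 * b * (p + 1) * p * (K ^ 2 - ‖x - z‖ ^ 2) ^ (p - 1) * inner ℝ (x - z) ξ ^ 2 ≤
      fderiv ℝ (fderiv ℝ u) x ξ ξ := by
  obtain ⟨w', hw, hw'⟩ := exists_hasDerivAt_barrier_line (a := a) (b := b) ξ hp0 hx
  have hle := le_fderiv_fderiv_of_isLocalMin_sub hmin hu (Eventually.of_forall hw) hw'
  have hs : 0 ≤ K ^ 2 - ‖x - z‖ ^ 2 := by nlinarith [norm_nonneg (x - z)]
  have hsp : (K ^ 2 - ‖x - z‖ ^ 2) ^ p ≤ (K ^ 2) ^ p :=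
    Real.rpow_le_rpow hs (by linarith [sq_nonneg ‖x - z‖]) hp0
  have : b * (p + 1) * (K ^ 2 - ‖x - z‖ ^ 2) ^ p ≤ a / 2 := by
    nlinarith [mul_le_mul_of_nonneg_left hsp hb, mul_nonneg hb (Real.rpow_nonneg hs p)]
  nlinarith [sq_nonneg ‖ξ‖]

end Barrier

/-- At a point where `s = K² - ‖y - z‖²`, `aⁿ (1 + …)` is the lower bound for `det D²u` coming
from the barrier, and `R̄ (a s / 2)^(p-1)` bounds the right-hand side of the equation. -/
structure BarrierParams (n : ℕ) (p K Rbar a b : ℝ) : Prop where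
  pos : 0 < a
  nonneg : 0 ≤ b
  le : 4 * b * (K ^ 2) ^ p ≤ a
  rhs_le_det : ∀ s, 0 < s → s ≤ K ^ 2 →
    Rbar * (a * s / 2) ^ (p - 1) ≤ a ^ n * (1 + 4 * b * (p + 1) * p * s ^ (p - 1) * (K ^ 2 - s) / a)

section Hessian

variable {n : ℕ}

theorem hess_apply {u : EuclideanSpace ℝ (Fin n) → ℝ} {x : EuclideanSpace ℝ (Fin n)}
    (hu : ContDiffAt ℝ 2 u x) (i j : Fin n) :
    hess u x i j =
      fderiv ℝ (fderiv ℝ u) x (EuclideanSpace.single i 1) (EuclideanSpace.single j 1) := by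
  have hB : HasFDerivAt (fderiv ℝ u) (fderiv ℝ (fderiv ℝ u) x) x :=
    ((hu.fderiv_right (m := 1) one_add_one_eq_two.le).differentiableAt one_ne_zero).hasFDerivAt
  simp [hess, (hB.clm_apply (hasFDerivAt_const (EuclideanSpace.single j 1) x)).fderiv]

theorem dotProduct_hess_mulVec {u : EuclideanSpace ℝ (Fin n) → ℝ} {x : EuclideanSpace ℝ (Fin n)}
    (hu : ContDiffAt ℝ 2 u x) (ξ : EuclideanSpace ℝ (Fin n)) :
    ξ.ofLp ⬝ᵥ (hess u x *ᵥ ξ.ofLp) = fderiv ℝ (fderiv ℝ u) x ξ ξ := by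
  conv_rhs => rw [← (EuclideanSpace.basisFun (Fin n) ℝ).sum_repr ξ]
  simp only [dotProduct, mulVec, hess_apply hu, Finset.mul_sum, EuclideanSpace.basisFun_repr,
    EuclideanSpace.basisFun_apply, map_sum, map_smul, _root_.sum_apply,
    _root_.smul_apply, smul_eq_mul]
  rw [Finset.sum_comm]
  congr! 2 with i j
  ring

theorem isHermitian_hess {u : EuclideanSpace ℝ (Fin n) → ℝ} {x : EuclideanSpace ℝ (Fin n)}
    (hu : ContDiffAt ℝ 2 u x) : (hess u x).IsHermitian := by
  ext i j
  simp [hess_apply hu, (hu.isSymmSndFDerivAt (by simp)).eq]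

theorem le_det_hess_of_forall_le {u : EuclideanSpace ℝ (Fin n) → ℝ} {x : EuclideanSpace ℝ (Fin n)}
    (hu : ContDiffAt ℝ 2 u x) {a c : ℝ} (ha : 0 < a) (hc : 0 ≤ c) (v : EuclideanSpace ℝ (Fin n))
    (h : ∀ ξ, a * ‖ξ‖ ^ 2 + c * inner ℝ v ξ ^ 2 ≤ fderiv ℝ (fderiv ℝ u) x ξ ξ) :
    a ^ n * (1 + c * ‖v‖ ^ 2 / a) ≤ (hess u x).det := by
  have hnorm : ∀ ξ : EuclideanSpace ℝ (Fin n), ‖ξ‖ ^ 2 = ξ.ofLp ⬝ᵥ ξ.ofLp := fun ξ => by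
    rw [← real_inner_self_eq_norm_sq, EuclideanSpace.inner_eq_star_dotProduct, star_trivial]
  have hle : (hess u x - (a • 1 + c • vecMulVec v.ofLp v.ofLp)).PosSemidef := by
    refine PosSemidef.of_dotProduct_mulVec_nonneg
      ((isHermitian_hess hu).sub ((posDef_smul_one_add_smul_vecMulVec ha hc _).isHermitian))
      fun ξ => ?_
    have := h (WithLp.toLp 2 ξ)
    rw [← dotProduct_hess_mulVec hu, hnorm, EuclideanSpace.inner_eq_star_dotProduct, star_trivial,
      WithLp.ofLp_toLp, dotProduct_comm ξ v.ofLp] at this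
    simp only [star_trivial, sub_mulVec, dotProduct_sub,
      dotProduct_smul_one_add_smul_vecMulVec_mulVec]
    linarith
  simpa [det_smul_one_add_smul_vecMulVec ha.ne', hnorm] using
    (posDef_smul_one_add_smul_vecMulVec ha hc _).det_le_det_of_posSemidef_sub hle

theorem neg_le_of_det_hess_le {Ω : Set (EuclideanSpace ℝ (Fin n))}
    {u : EuclideanSpace ℝ (Fin n) → ℝ} {z : EuclideanSpace ℝ (Fin n)} {p K Rbar a b : ℝ}
    (hp0 : 0 < p) (hp1 : p < 1) (hRbar : 0 < Rbar) (hab : BarrierParams n p K Rbar a b)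
    (hΩ : IsOpen Ω) (hΩb : Bornology.IsBounded Ω) (hball : Ω ⊆ ball z K)
    (hu2 : ContDiffOn ℝ 2 u Ω) (hu : ContinuousOn u (closure Ω)) (hu0 : ∀ x ∈ frontier Ω, u x = 0)
    (hdet : ∀ x ∈ Ω, (hess u x).det ≤ Rbar * (-u x) ^ (p - 1)) :
    ∀ x ∈ Ω, -u x ≤ a * (K ^ 2 - ‖x - z‖ ^ 2) := by
  set w := barrier a b p K z
  have hcl : ∀ y ∈ closure Ω, ‖y - z‖ ≤ K := fun y hy => by
    simpa [dist_eq_norm] using closure_ball_subset_closedBall (closure_mono hball hy)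
  suffices h : ∀ y ∈ Ω, w y ≤ u y from fun x hx => by
    linarith [h x hx, neg_mul_le_barrier (a := a) (p := p) hab.nonneg (hcl x (subset_closure hx))]
  by_contra! ⟨x, hx, hlt⟩
  obtain ⟨y, hycl, hymin⟩ := hΩb.isCompact_closure.exists_isMinOn ⟨x, subset_closure hx⟩
    (hu.sub (continuous_barrier hp0.le z).continuousOn)
  have hneg : u y - w y < 0 := (hymin (subset_closure hx)).trans_lt (sub_neg.2 hlt)
  have hwy : w y ≤ -(a * (K ^ 2 - ‖y - z‖ ^ 2) / 2) :=
    barrier_le hab.nonneg hp0.le hab.le (hcl y hycl)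
  set s := K ^ 2 - ‖y - z‖ ^ 2
  have hyΩ : y ∈ Ω := by
    by_contra hyΩ
    have := hu0 y ⟨hycl, by rwa [hΩ.interior_eq]⟩
    have : 0 ≤ s := by nlinarith [norm_nonneg (y - z), hcl y hycl]
    nlinarith [hab.pos]
  have huy : ContDiffAt ℝ 2 u y := hu2.contDiffAt (hΩ.mem_nhds hyΩ)
  have hyz : ‖y - z‖ < K := by simpa [dist_eq_norm] using hball hyΩ
  have hs : 0 < s := by nlinarith [norm_nonneg (y - z)]
  have hmin : IsLocalMin (fun y => u y - w y) y :=
    hymin.isLocalMin (mem_of_superset (hΩ.mem_nhds hyΩ) subset_closure)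
  have hlow := le_det_hess_of_forall_le huy hab.pos (by have := hab.nonneg; positivity) (y - z)
    (le_fderiv_fderiv_of_isLocalMin_sub_barrier hab.nonneg hp0.le hp1.le hab.le hmin huy hyz)
  have hsub := hab.rhs_le_det s hs (by linarith [sq_nonneg ‖y - z‖])
  rw [sub_sub_cancel] at hsub
  have hus : a * s / 2 < -u y := by linarith
  have hpow : (-u y) ^ (p - 1) < (a * s / 2) ^ (p - 1) :=
    Real.rpow_lt_rpow_of_neg (by have := hab.pos; positivity) hus (by linarith)
  linarith [hdet y hyΩ, mul_lt_mul_of_pos_left hpow hRbar]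

end Hessian

theorem exists_pos_add_smul_mem_frontier {E : Type*} [NormedAddCommGroup E] [NormedSpace ℝ E]
    {Ω : Set E} (hΩ : IsOpen Ω) (hb : Bornology.IsBounded Ω) {x e : E} (hx : x ∈ Ω) (he : e ≠ 0) :
    ∃ T : ℝ, 0 < T ∧ x + T • e ∈ frontier Ω := by
  by_contra! h
  have hγ : Continuous fun t : ℝ => x + t • e := by fun_prop
  have hray : Ici (0 : ℝ) ⊆ (fun t : ℝ => x + t • e) ⁻¹' Ω := by
    refine isPreconnected_Ici.subset_of_closure_inter_subset (hΩ.preimage hγ)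
      ⟨0, mem_Ici.2 le_rfl, by simpa using hx⟩ ?_
    rintro t ⟨htcl, ht0 : 0 ≤ t⟩
    rcases ht0.eq_or_lt with rfl | htpos
    · simpa using hx
    · have hcl := hγ.closure_preimage_subset Ω htcl
      by_contra hnot
      exact h t htpos ⟨hcl, by rwa [hΩ.interior_eq]⟩
  obtain ⟨r, hr⟩ := hb.subset_closedBall x
  have hr0 : 0 ≤ r := dist_nonneg.trans (hr hx)
  have hepos : 0 < ‖e‖ := norm_pos_iff.mpr he
  have hT : 0 ≤ (r + 1) / ‖e‖ := by positivity
  have hmem := hr (hray hT)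
  rw [mem_closedBall, dist_eq_norm, add_sub_cancel_left, norm_smul, Real.norm_eq_abs,
    abs_of_nonneg hT, div_mul_cancel₀ _ hepos.ne'] at hmem
  linarith

theorem norm_gradient_le_of_convexOn {F : Type*} [NormedAddCommGroup F] [InnerProductSpace ℝ F]
    [CompleteSpace F] {Ω : Set F} {u : F → ℝ} {x : F} {L : ℝ} (hΩ : IsOpen Ω)
    (hb : Bornology.IsBounded Ω) (hconv : ConvexOn ℝ (closure Ω) u) (hx : x ∈ Ω)
    (hdiff : DifferentiableAt ℝ u x) (hu : ∀ y ∈ frontier Ω, u y = 0) (hL : 0 ≤ L)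
    (hbound : ∀ y ∈ frontier Ω, -u x ≤ L * ‖y - x‖) : ‖gradient u x‖ ≤ L := by
  set e := gradient u x
  rcases eq_or_ne e 0 with he | he
  · simpa [he] using hL
  obtain ⟨T, hT, hy⟩ := exists_pos_add_smul_mem_frontier hΩ hb hx he
  set γ : ℝ →ᵃ[ℝ] F := AffineMap.lineMap x (x + e)
  have hγ : ∀ t, γ t = x + t • e := fun t => by
    simp [γ, AffineMap.lineMap_apply_module', add_comm]
  have hφ : ConvexOn ℝ (γ ⁻¹' closure Ω) (u ∘ γ) := hconv.comp_affineMap γ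
  have hderiv : HasDerivAt (u ∘ γ) (‖e‖ ^ 2) 0 := by
    have hγ' : HasDerivAt γ e 0 := by
      simpa using AffineMap.hasDerivAt_lineMap (a := x) (b := x + e) (x := (0 : ℝ))
    have := (by simpa [hγ] using hdiff.hasFDerivAt : HasFDerivAt u (fderiv ℝ u x) (γ 0))
      |>.comp_hasDerivAt 0 hγ'
    rwa [← inner_gradient_left, real_inner_self_eq_norm_sq] at this
  have hslope : ‖e‖ ^ 2 ≤ -u x / T := by
    simpa [slope_def_field, hγ, hu _ hy] using hφ.le_slope_of_hasDerivAt (x := 0) (y := T)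
      (by simpa [hγ] using subset_closure hx) (by simpa [hγ] using frontier_subset_closure hy) hT
      hderiv
  have hbound' : -u x ≤ L * (T * ‖e‖) := by
    simpa [norm_smul, abs_of_pos hT] using hbound _ hy
  rw [le_div_iff₀ hT] at hslope
  have : ‖e‖ * (T * ‖e‖) ≤ L * (T * ‖e‖) := by linarith
  exact le_of_mul_le_mul_right this (mul_pos hT (norm_pos_iff.mpr he))

theorem exists_barrierParams {n : ℕ} {p K Rbar : ℝ} (hn : 1 ≤ n) (hp0 : 0 < p) (hp1 : p < 1)
    (hK : 0 < K) (hRbar : 0 < Rbar) : ∃ a b : ℝ, BarrierParams n p K Rbar a b := by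
  -- `b` turns the bound for `s ≤ K² / 2` into an identity (see `heq`); `a` handles `s ≥ K² / 2`.
  set b := Rbar / (2 ^ (p - 1) * (2 * K ^ 2 * (p + 1) * p))
  set a := max 1 (max (Rbar * (K ^ 2 / 4) ^ (p - 1)) (4 * b * (K ^ 2) ^ p))
  have ha1 : 1 ≤ a := le_max_left _ _
  have ha : 0 < a := one_pos.trans_le ha1
  have hb : 0 < b := by positivity
  refine ⟨a, b, ha, hb.le, (le_max_right _ _).trans (le_max_right _ _), fun s hs hsK => ?_⟩
  set X := 4 * b * (p + 1) * p * s ^ (p - 1) * (K ^ 2 - s)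
  have hX : 0 ≤ X := mul_nonneg (by positivity) (by linarith)
  have han : a ≤ a ^ n := le_self_pow₀ ha1 (by omega)
  have hlow : a ^ n + X ≤ a ^ n * (1 + X / a) := by
    rw [mul_add, mul_one, mul_div_assoc', add_le_add_iff_left, le_div_iff₀ ha, mul_comm X]
    exact mul_le_mul_of_nonneg_right han hX
  have hmono : Rbar * (a * s / 2) ^ (p - 1) ≤ Rbar * (s / 2) ^ (p - 1) :=
    mul_le_mul_of_nonneg_left (Real.rpow_le_rpow_of_nonpos (by positivity)
      (by nlinarith) (by linarith)) hRbar.le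
  have han0 : 0 ≤ a ^ n := by positivity
  rcases le_or_gt s (K ^ 2 / 2) with hsK2 | hsK2
  · have heq : Rbar * (s / 2) ^ (p - 1) = 4 * b * (p + 1) * p * s ^ (p - 1) * (K ^ 2 / 2) := by
      rw [Real.div_rpow hs.le zero_le_two]
      simp only [b]
      field_simp
      ring
    have : 4 * b * (p + 1) * p * s ^ (p - 1) * (K ^ 2 / 2) ≤ X :=
      mul_le_mul_of_nonneg_left (by linarith) (by positivity)
    linarith
  · have : Rbar * (s / 2) ^ (p - 1) ≤ Rbar * (K ^ 2 / 4) ^ (p - 1) :=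
      mul_le_mul_of_nonneg_left (Real.rpow_le_rpow_of_nonpos (by positivity) (by linarith)
        (by linarith)) hRbar.le
    linarith [(le_max_left _ _).trans (le_max_right _ _ : _ ≤ a)]

/-- for `0 < p < 1`, a uniform gradient bound, with constant depending only on
`n`, `p`, `R̄` and `K`, for solutions on domains satisfying a uniform enclosing sphere
condition with radius `K` and with `0 ≤ R ≤ R̄`. -/
theorem stmt7 (n : ℕ) (hn : 1 ≤ n) (p : ℝ) (hp0 : 0 < p) (hp1 : p < 1)
    (K Rbar : ℝ) (hK : 0 < K) (hRbar : 0 < Rbar) :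
    ∃ C : ℝ, ∀ Ω : Set (EuclideanSpace ℝ (Fin n)),
      IsOpen Ω → Bornology.IsBounded Ω → Convex ℝ Ω →
      (∀ x₀ ∈ frontier Ω, ∃ z : EuclideanSpace ℝ (Fin n), Ω ⊆ ball z K ∧ dist x₀ z = K) →
      ∀ R : EuclideanSpace ℝ (Fin n) → ℝ, (∀ x ∈ Ω, 0 ≤ R x ∧ R x ≤ Rbar) →
      ∀ u : EuclideanSpace ℝ (Fin n) → ℝ,
        ConvexOn ℝ (closure Ω) u → ContDiffOn ℝ 2 u Ω → ContinuousOn u (closure Ω) →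
        (∀ x ∈ Ω, u x < 0) → (∀ x ∈ frontier Ω, u x = 0) →
        (∀ x ∈ Ω, (hess u x).det = R x * (-u x) ^ (p - 1)) →
        ∀ x ∈ Ω, ‖gradient u x‖ ≤ C := by
  obtain ⟨a, b, hab⟩ := exists_barrierParams hn hp0 hp1 hK hRbar
  refine ⟨2 * K * a, fun Ω hΩ hΩb _ hsphere R hR u hconv hu2 hu hneg hu0 hMA x hx => ?_⟩
  have hdet : ∀ y ∈ Ω, (hess u y).det ≤ Rbar * (-u y) ^ (p - 1) := fun y hy => by
    rw [hMA y hy]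
    exact mul_le_mul_of_nonneg_right (hR y hy).2 (Real.rpow_nonneg (by linarith [hneg y hy]) _)
  refine norm_gradient_le_of_convexOn hΩ hΩb hconv hx
    ((hu2.contDiffAt (hΩ.mem_nhds hx)).differentiableAt two_ne_zero) hu0
    (by have := hab.pos; positivity)
    fun y hy => ?_
  obtain ⟨z, hz, hyz⟩ := hsphere y hy
  have hxz : ‖x - z‖ < K := by simpa [dist_eq_norm] using hz hx
  have htri : K ≤ ‖y - x‖ + ‖x - z‖ := by
    simpa [← dist_eq_norm, hyz] using dist_triangle y x z
  calc -u x ≤ a * (K ^ 2 - ‖x - z‖ ^ 2) :=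
        neg_le_of_det_hess_le hp0 hp1 hRbar hab hΩ hΩb hz hu2 hu hu0 hdet x hx
    _ = a * ((K - ‖x - z‖) * (K + ‖x - z‖)) := by ring
    _ ≤ a * (‖y - x‖ * (2 * K)) := by have := hab.pos; gcongr <;> linarith
    _ = 2 * K * a * ‖y - x‖ := by ring
end

section
/- Let n ≥ 1, p > n + 1, q ∈ (0,1). Set γ = (n + p + 1)/2 − q, δ = (γ − n)/(p − n − 1), C₁ = (2δ)ⁿ · min{1, 2δ − 1} and C₂ = (2δ)ⁿ · max{1, 2δ − 1}. Then δ > 1/2, and for λ > 0 the function w_λ(x) = λ (1 + ‖x‖²)^δ on ℝⁿ satisfies: (i) if λ^{p−1−n} ≥ C₂, then det D²w_λ(x) ≤ (1 + ‖x‖²)^{−γ} w_λ(x)^{p−1} for all x ∈ ℝⁿ; (ii) if 0 < λ^{p−1−n} ≤ C₁, then det D²w_λ(x) ≥ (1 + ‖x‖²)^{−γ} w_λ(x)^{p−1} for all x ∈ ℝⁿ. -/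
/-!
The function `w_λ` is radial, so its Hessian is a multiple of the identity plus a rank-one
matrix `x xᵀ`, and the matrix determinant lemma gives
`det D²w_λ(x) = (2λδ)ⁿ (1+‖x‖²)^((δ-1)n) · (1 + (2δ-1)‖x‖²)/(1+‖x‖²)`.
The value of `δ` is chosen so that `δ(p-1) - γ = (δ-1)n`, hence `(1+‖x‖²)^(-γ) w_λ(x)^(p-1)`
carries the same factor `λⁿ (1+‖x‖²)^((δ-1)n)`. Both inequalities then compare `λ^(p-1-n)` with
`(2δ)ⁿ` times `(1 + (2δ-1)s)/(1+s)`, a weighted mean of `1` and `2δ-1`, which lies between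
their minimum and maximum.
-/

open MeasureTheory Metric Set Filter

open Matrix in
theorem Matrix.det_smul_one_add_vecMulVec {m K : Type*} [Fintype m] [DecidableEq m] [Field K]
    {c : K} (hc : c ≠ 0) (u v : m → K) :
    (c • (1 : Matrix m m K) + vecMulVec u v).det = c ^ Fintype.card m * (1 + v ⬝ᵥ u / c) := by
  have : c • (1 : Matrix m m K) + vecMulVec u v
      = c • (1 + replicateCol Unit (c⁻¹ • u) * replicateRow Unit v) := by
    rw [← vecMulVec_eq, smul_add, ← smul_vecMulVec, smul_smul, mul_inv_cancel₀ hc, one_smul]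
  rw [this, det_smul, det_one_add_replicateCol_mul_replicateRow, dotProduct_smul, smul_eq_mul,
    div_eq_inv_mul]

section InnerProductSpace

variable {F : Type*} [NormedAddCommGroup F] [InnerProductSpace ℝ F]

open scoped RealInnerProductSpace

theorem hasFDerivAt_const_mul_one_add_norm_sq_rpow (lam δ : ℝ) (y : F) :
    HasFDerivAt (fun z : F => lam * (1 + ‖z‖ ^ 2) ^ δ)
      ((2 * lam * δ * (1 + ‖y‖ ^ 2) ^ (δ - 1)) • innerSL ℝ y) y := by
  have hpos : 0 < 1 + ‖y‖ ^ 2 := by positivity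
  refine ((((hasStrictFDerivAt_norm_sq y).hasFDerivAt.const_add 1).rpow_const
    (Or.inl hpos.ne')).const_mul lam).congr_fderiv (ContinuousLinearMap.ext fun v => ?_)
  simp only [smul_apply, coe_innerSL_apply, nsmul_eq_mul, Nat.cast_ofNat, smul_eq_mul]
  ring

theorem fderiv_const_mul_one_add_norm_sq_rpow_apply (lam δ : ℝ) (v : F) :
    (fun y => fderiv ℝ (fun z : F => lam * (1 + ‖z‖ ^ 2) ^ δ) y v)
      = fun y => 2 * lam * δ * ((1 + ‖y‖ ^ 2) ^ (δ - 1) * ⟪v, y⟫) := by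
  funext y
  rw [(hasFDerivAt_const_mul_one_add_norm_sq_rpow lam δ y).fderiv]
  simp only [smul_apply, coe_innerSL_apply, smul_eq_mul, real_inner_comm y]
  ring

theorem fderiv_fderiv_const_mul_one_add_norm_sq_rpow_apply (lam δ : ℝ) (x u v : F) :
    fderiv ℝ (fun y => fderiv ℝ (fun z : F => lam * (1 + ‖z‖ ^ 2) ^ δ) y v) x u
      = 2 * lam * δ * (1 + ‖x‖ ^ 2) ^ (δ - 1) * ⟪u, v⟫
        + 4 * lam * δ * (δ - 1) * (1 + ‖x‖ ^ 2) ^ (δ - 2) * (⟪x, u⟫ * ⟪x, v⟫) := by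
  have hpos : 0 < 1 + ‖x‖ ^ 2 := by positivity
  have hpow := ((hasStrictFDerivAt_norm_sq x).hasFDerivAt.const_add 1).rpow_const
    (p := δ - 1) (Or.inl hpos.ne')
  have hderiv : HasFDerivAt (fun y => 2 * lam * δ * ((1 + ‖y‖ ^ 2) ^ (δ - 1) * ⟪v, y⟫)) _ x :=
    (hpow.mul (innerSL ℝ v).hasFDerivAt).const_mul (2 * lam * δ)
  rw [fderiv_const_mul_one_add_norm_sq_rpow_apply, hderiv.fderiv]
  simp only [coe_innerSL_apply, show δ - 1 - 1 = δ - 2 by ring, smul_add, add_apply, smul_apply,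
    smul_eq_mul, nsmul_eq_mul, Nat.cast_ofNat, real_inner_comm v]
  ring

end InnerProductSpace

theorem hess_const_mul_one_add_norm_sq_rpow {n : ℕ} (lam δ : ℝ) (x : EuclideanSpace ℝ (Fin n)) :
    hess (fun y => lam * (1 + ‖y‖ ^ 2) ^ δ) x
      = (2 * lam * δ * (1 + ‖x‖ ^ 2) ^ (δ - 1)) • (1 : Matrix (Fin n) (Fin n) ℝ)
        + Matrix.vecMulVec ((4 * lam * δ * (δ - 1) * (1 + ‖x‖ ^ 2) ^ (δ - 2)) • x.ofLp) x.ofLp := by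
  ext i j
  rw [hess, fderiv_fderiv_const_mul_one_add_norm_sq_rpow_apply]
  simp only [EuclideanSpace.inner_single_right, PiLp.single_apply, eq_comm,
    MonoidWithZeroHom.map_ite_one_zero, mul_ite, mul_one, mul_zero, Real.ringHom_apply, one_mul,
    Matrix.smul_vecMulVec, Matrix.add_apply, Matrix.smul_apply, Matrix.one_apply, smul_eq_mul,
    Matrix.vecMulVec_apply]

theorem det_hess_const_mul_one_add_norm_sq_rpow {n : ℕ} {lam δ : ℝ} (hlam : lam ≠ 0) (hδ : δ ≠ 0)
    (x : EuclideanSpace ℝ (Fin n)) :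
    (hess (fun y => lam * (1 + ‖y‖ ^ 2) ^ δ) x).det
      = lam ^ n * (1 + ‖x‖ ^ 2) ^ ((δ - 1) * n)
        * ((2 * δ) ^ n * ((1 + (2 * δ - 1) * ‖x‖ ^ 2) / (1 + ‖x‖ ^ 2))) := by
  have hdot : x.ofLp ⬝ᵥ x.ofLp = ‖x‖ ^ 2 := by
    rw [← real_inner_self_eq_norm_sq, EuclideanSpace.inner_eq_star_dotProduct, star_trivial]
  set t := 1 + ‖x‖ ^ 2
  have ht : 0 < t := by positivity
  have hc : 2 * lam * δ * t ^ (δ - 1) ≠ 0 := by positivity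
  have hpow_sub_one : t ^ (δ - 2) = t ^ (δ - 1) / t := by
    rw [← Real.rpow_sub_one ht.ne']
    ring_nf
  rw [hess_const_mul_one_add_norm_sq_rpow, Matrix.det_smul_one_add_vecMulVec hc, Fintype.card_fin,
    dotProduct_smul, smul_eq_mul, hdot, hpow_sub_one, Real.rpow_mul_natCast ht.le]
  field_simp
  ring

theorem rpow_neg_mul_mul_rpow_rpow {t lam p γ δ a : ℝ} (ht : 0 < t) (hlam : 0 < lam)
    (hexp : δ * (p - 1) - γ = (δ - 1) * a) :
    t ^ (-γ) * (lam * t ^ δ) ^ (p - 1) = lam ^ a * t ^ ((δ - 1) * a) * lam ^ (p - 1 - a) := by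
  calc t ^ (-γ) * (lam * t ^ δ) ^ (p - 1) = lam ^ (p - 1) * t ^ (δ * (p - 1) - γ) := by
        rw [Real.mul_rpow hlam.le (Real.rpow_nonneg ht.le _), ← Real.rpow_mul ht.le,
          Real.rpow_sub ht, Real.rpow_neg ht.le]
        ring
    _ = lam ^ a * t ^ ((δ - 1) * a) * lam ^ (p - 1 - a) := by
        rw [hexp, mul_right_comm, ← Real.rpow_add hlam, add_sub_cancel]

theorem min_le_one_add_mul_div_one_add {a s : ℝ} (hs : 0 ≤ s) :
    min 1 a ≤ (1 + a * s) / (1 + s) := by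
  rw [le_div_iff₀ (by positivity)]
  nlinarith [min_le_left 1 a, min_le_right 1 a]

theorem one_add_mul_div_one_add_le_max {a s : ℝ} (hs : 0 ≤ s) :
    (1 + a * s) / (1 + s) ≤ max 1 a := by
  rw [div_le_iff₀ (by positivity)]
  nlinarith [le_max_left 1 a, le_max_right 1 a]

theorem stmt11_general (n : ℕ) (p q γ δ C₁ C₂ : ℝ)
    (hp : (n : ℝ) + 1 < p) (hq1 : q < 1)
    (hγ : γ = ((n : ℝ) + p + 1) / 2 - q) (hδ : δ = (γ - (n : ℝ)) / (p - (n : ℝ) - 1))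
    (hC₁ : C₁ = (2 * δ) ^ n * min 1 (2 * δ - 1))
    (hC₂ : C₂ = (2 * δ) ^ n * max 1 (2 * δ - 1)) :
    1 / 2 < δ ∧
    ∀ lam : ℝ, 0 < lam →
      ((C₂ ≤ lam ^ (p - 1 - (n : ℝ))) →
        ∀ x : EuclideanSpace ℝ (Fin n),
          (hess (fun y => lam * (1 + ‖y‖ ^ 2) ^ δ) x).det
            ≤ (1 + ‖x‖ ^ 2) ^ (-γ) * (lam * (1 + ‖x‖ ^ 2) ^ δ) ^ (p - 1)) ∧
      ((lam ^ (p - 1 - (n : ℝ)) ≤ C₁) →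
        ∀ x : EuclideanSpace ℝ (Fin n),
          (1 + ‖x‖ ^ 2) ^ (-γ) * (lam * (1 + ‖x‖ ^ 2) ^ δ) ^ (p - 1)
            ≤ (hess (fun y => lam * (1 + ‖y‖ ^ 2) ^ δ) x).det) := by
  have hpn : 0 < p - n - 1 := by linarith
  have hδ_gt : 1 / 2 < δ := by
    rw [hδ, hγ, lt_div_iff₀ hpn]
    linarith
  have hexp : δ * (p - 1) - γ = (δ - 1) * n := by
    rw [hδ]
    field_simp
    ring
  have hδ_pos : 0 < δ := by linarith
  subst hC₁ hC₂
  refine ⟨hδ_gt, fun lam hlam => ⟨fun hC x => ?_, fun hC x => ?_⟩⟩ <;>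
    have hx : 0 ≤ ‖x‖ ^ 2 := sq_nonneg _ <;>
    rw [det_hess_const_mul_one_add_norm_sq_rpow hlam.ne' hδ_pos.ne',
      rpow_neg_mul_mul_rpow_rpow (by positivity) hlam hexp, Real.rpow_natCast] <;>
    refine mul_le_mul_of_nonneg_left ?_ (by positivity)
  · exact le_trans (by gcongr; exact one_add_mul_div_one_add_le_max hx) hC
  · exact hC.trans (by gcongr; exact min_le_one_add_mul_div_one_add hx)

/-- sub- and supersolution property of `w_λ(x) = λ(1+‖x‖²)^δ` for the equation
`det D²w = (1+‖x‖²)^{-γ} w^{p-1}`, `p > n+1`. -/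
theorem stmt11 (n : ℕ) (hn : 1 ≤ n) (p q γ δ C₁ C₂ : ℝ)
    (hp : (n : ℝ) + 1 < p) (hq0 : 0 < q) (hq1 : q < 1)
    (hγ : γ = ((n : ℝ) + p + 1) / 2 - q) (hδ : δ = (γ - (n : ℝ)) / (p - (n : ℝ) - 1))
    (hC₁ : C₁ = (2 * δ) ^ n * min 1 (2 * δ - 1))
    (hC₂ : C₂ = (2 * δ) ^ n * max 1 (2 * δ - 1)) :
    1 / 2 < δ ∧
    ∀ lam : ℝ, 0 < lam →
      ((C₂ ≤ lam ^ (p - 1 - (n : ℝ))) →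
        ∀ x : EuclideanSpace ℝ (Fin n),
          (hess (fun y => lam * (1 + ‖y‖ ^ 2) ^ δ) x).det
            ≤ (1 + ‖x‖ ^ 2) ^ (-γ) * (lam * (1 + ‖x‖ ^ 2) ^ δ) ^ (p - 1)) ∧
      ((lam ^ (p - 1 - (n : ℝ)) ≤ C₁) →
        ∀ x : EuclideanSpace ℝ (Fin n),
          (1 + ‖x‖ ^ 2) ^ (-γ) * (lam * (1 + ‖x‖ ^ 2) ^ δ) ^ (p - 1)
            ≤ (hess (fun y => lam * (1 + ‖y‖ ^ 2) ^ δ) x).det) :=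
  stmt11_general n p q γ δ C₁ C₂ hp hq1 hγ hδ hC₁ hC₂
end

section
/- Let n ≥ 1 and let u : ℝⁿ → ℝ be a convex, differentiable function such that the gradient map ∇u : ℝⁿ → ℝⁿ is surjective. Then u(x)/‖x‖ → ∞ as ‖x‖ → ∞. -/
/-!
Writing `v = ∇u(y)`, the gradient inequality for the convex function `u` gives the affine
minorant `u x ≥ ⟪v, x⟫ + (u y - ⟪v, y⟫)`; by surjectivity of `∇u` there is one of every slope `v`.
Finitely many slopes `v` suffice to get `max_v ⟪v, x⟫ ≥ R ‖x‖` for all `x`: take a finite `R`-net of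
the closed ball of radius `2R`. Hence `u x ≥ R ‖x‖ + C_R` for every `R`, which is superlinearity.
-/

open Metric Set Filter

open scoped RealInnerProductSpace

theorem ConvexOn.add_fderiv_sub_le {E : Type*} [NormedAddCommGroup E] [NormedSpace ℝ E]
    {f : E → ℝ} {f' : E →L[ℝ] ℝ} {s : Set E} {x y : E} (hf : ConvexOn ℝ s f) (hx : x ∈ s)
    (hy : y ∈ s) (hf' : HasFDerivAt f f' y) :
    f y + f' (x - y) ≤ f x := by
  have hline : ConvexOn ℝ (AffineMap.lineMap y x ⁻¹' s) (f ∘ AffineMap.lineMap y x) :=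
    hf.comp_affineMap _
  have hderiv : HasDerivAt (f ∘ AffineMap.lineMap (k := ℝ) y x) (f' (x - y)) 0 :=
    (AffineMap.lineMap_apply_zero (k := ℝ) y x ▸ hf').comp_hasDerivAt 0
      AffineMap.hasDerivAt_lineMap
  have hslope := hline.le_slope_of_hasDerivAt (x := (0 : ℝ)) (y := 1) (by simpa using hy)
    (by simpa using hx) one_pos hderiv
  simp only [slope_def_field, Function.comp_apply, AffineMap.lineMap_apply_zero,
    AffineMap.lineMap_apply_one, sub_zero, div_one] at hslope
  linarith

section InnerProductSpace

variable {E : Type*} [NormedAddCommGroup E] [InnerProductSpace ℝ E]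

theorem ConvexOn.add_inner_gradient_sub_le [CompleteSpace E] {f : E → ℝ} {g : E} {s : Set E}
    {x y : E} (hf : ConvexOn ℝ s f) (hx : x ∈ s) (hy : y ∈ s) (hg : HasGradientAt f g y) :
    f y + ⟪g, x - y⟫ ≤ f x := by
  simpa using hf.add_fderiv_sub_le hx hy hg.hasFDerivAt

theorem exists_finite_forall_exists_mul_norm_le_inner [ProperSpace E] {R : ℝ} (hR : 0 < R) :
    ∃ t : Set E, t.Finite ∧ ∀ x, ∃ v ∈ t, R * ‖x‖ ≤ ⟪v, x⟫ := by
  obtain ⟨t, -, htfin, hcover⟩ :=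
    finite_cover_balls_of_compact (isCompact_closedBall (0 : E) (2 * R)) hR
  refine ⟨t, htfin, fun x => ?_⟩
  set w : E := (2 * R / ‖x‖) • x
  obtain ⟨hw, hwx⟩ : ‖w‖ ≤ 2 * R ∧ ⟪w, x⟫ = 2 * R * ‖x‖ := by
    rcases eq_or_ne x 0 with rfl | hx
    · simp only [w, smul_zero, norm_zero, inner_zero_right, mul_zero, and_true]
      positivity
    · refine ⟨by simp [w, norm_smul, abs_of_pos hR, hx], ?_⟩
      rw [real_inner_smul_left, real_inner_self_eq_norm_sq]
      field_simp
  obtain ⟨v, hvt, hvw⟩ := mem_iUnion₂.1 (hcover (mem_closedBall_zero_iff.2 hw))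
  refine ⟨v, hvt, ?_⟩
  have hclose : ⟪w - v, x⟫ ≤ R * ‖x‖ := by
    rw [mem_ball, dist_eq_norm] at hvw
    exact (real_inner_le_norm _ _).trans (by gcongr)
  rw [inner_sub_left, hwx] at hclose
  linarith

theorem exists_forall_mul_norm_add_le_of_forall_exists_inner_add_le [ProperSpace E]
    {u : E → ℝ} (hu : ∀ v, ∃ c, ∀ x, ⟪v, x⟫ + c ≤ u x) {R : ℝ} (hR : 0 < R) :
    ∃ C, ∀ x, R * ‖x‖ + C ≤ u x := by
  choose c hc using hu
  obtain ⟨t, htfin, ht⟩ := exists_finite_forall_exists_mul_norm_le_inner (E := E) hR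
  obtain ⟨C, hC⟩ := (htfin.image c).bddBelow
  refine ⟨C, fun x => ?_⟩
  obtain ⟨v, hvt, hv⟩ := ht x
  linarith [hC (mem_image_of_mem c hvt), hc v x]

end InnerProductSpace

theorem tendsto_div_norm_cocompact_atTop_of_forall_mul_norm_add_le {E : Type*}
    [NormedAddCommGroup E] [ProperSpace E] {u : E → ℝ}
    (hu : ∀ R > 0, ∃ C, ∀ x, R * ‖x‖ + C ≤ u x) :
    Tendsto (fun x => u x / ‖x‖) (cocompact E) atTop := by
  refine tendsto_atTop.2 fun b => ?_
  obtain ⟨C, hC⟩ := hu (max b 0 + 1) (by positivity)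
  filter_upwards [tendsto_norm_cocompact_atTop.eventually_ge_atTop (max 1 |C|)] with x hx
  have hx0 : 0 < ‖x‖ := lt_of_lt_of_le one_pos (le_of_max_le_left hx)
  rw [le_div_iff₀ hx0]
  nlinarith [hC x, neg_abs_le C, le_of_max_le_right hx, le_max_left b 0]

theorem stmt12_general (n : ℕ) (u : EuclideanSpace ℝ (Fin n) → ℝ)
    (huconv : ConvexOn ℝ univ u) (hud : Differentiable ℝ u)
    (hsurj : Function.Surjective (fun x => gradient u x)) :
    Tendsto (fun x => u x / ‖x‖) (cocompact (EuclideanSpace ℝ (Fin n))) atTop := by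
  have affine_minorant : ∀ v, ∃ c, ∀ x, ⟪v, x⟫ + c ≤ u x := by
    intro v
    obtain ⟨y, rfl⟩ := hsurj v
    refine ⟨u y - ⟪gradient u y, y⟫, fun x => ?_⟩
    have := huconv.add_inner_gradient_sub_le (mem_univ x) (mem_univ y) (hud y).hasGradientAt
    rw [inner_sub_right] at this
    linarith
  exact tendsto_div_norm_cocompact_atTop_of_forall_mul_norm_add_le fun R hR =>
    exists_forall_mul_norm_add_le_of_forall_exists_inner_add_le affine_minorant hR

/-- a convex differentiable function on `ℝⁿ` whose gradient map is surjective
is superlinear: `u(x)/‖x‖ → ∞` as `‖x‖ → ∞`. -/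
theorem stmt12 (n : ℕ) (hn : 1 ≤ n) (u : EuclideanSpace ℝ (Fin n) → ℝ)
    (huconv : ConvexOn ℝ univ u) (hud : Differentiable ℝ u)
    (hsurj : Function.Surjective (fun x => gradient u x)) :
    Tendsto (fun x => u x / ‖x‖) (cocompact (EuclideanSpace ℝ (Fin n))) atTop :=
  stmt12_general n u huconv hud hsurj
end
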